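/- arXiv:0907.5095 — 2 statements merged into one kernel-verified Lean document; each statement's English description precedes it below -/
import Mathlib

section
/- For n ≥ 0, the modified q-Euler number admits the closed form E_{n,q} = (1+q)·(1/(1−q))^n · Σ_{l=0}^{n} C(n,l) (−1)^l · 1/(1+q^l). -/
open Filter Topology Finset

variable (p : ℕ) [Fact p.Prime]

/-- Riemann sums for the modified `q`-Euler numbers
`E_{n,q} = ∫_{ℤ_p} ((1-q^x)/(1-q))^n q^{-x} dμ_q(x)`
(the factor `q^{-x}` cancels the `q^x` of the measure `(-q)^x`, leaving `(-1)^x`). -/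
noncomputable def modEulerSum (q : ℚ_[p]) (n N : ℕ) : ℚ_[p] :=
  (1 + q) / (1 + q ^ p ^ N) *
    ∑ x ∈ range (p ^ N), ((1 - q ^ x) / (1 - q)) ^ n * (-1 : ℚ_[p]) ^ x

/-- The modified `q`-Euler numbers `E_{n,q}`, as the limit of the Riemann sums. -/
noncomputable def modEuler (q : ℚ_[p]) (n : ℕ) : ℚ_[p] :=
  limUnder atTop (modEulerSum p q n)

/-- `q ^ x` for a `p`-adic integer exponent `x`, as the limit of `q ^ (x mod p^n)`. -/
noncomputable def qpowZ (q : ℚ_[p]) (x : ℤ_[p]) : ℚ_[p] :=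
  limUnder atTop (fun n => q ^ x.appr n)

/-- `q ^ x` for a rational exponent `x` lying in `ℤ_p` (junk value `1` otherwise). -/
noncomputable def qpowQ (q : ℚ_[p]) (x : ℚ) : ℚ_[p] :=
  if h : ‖(x : ℚ_[p])‖ ≤ 1 then qpowZ p q ⟨(x : ℚ_[p]), h⟩ else 1

/-- The `q`-Euler polynomial `E_{m,q}(x) = ∫_{ℤ_p} q^{-t} ((1-q^{x+t})/(1-q))^m dμ_q(t)`,
where `qx` stands for `q ^ x`. -/
noncomputable def qEulerPoly (q : ℚ_[p]) (m : ℕ) (qx : ℚ_[p]) : ℚ_[p] :=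
  limUnder atTop (fun N => (1 + q) / (1 + q ^ p ^ N) *
    ∑ t ∈ range (p ^ N), (q ^ t)⁻¹ * ((1 - qx * q ^ t) / (1 - q)) ^ m * (-q) ^ t)

/-- The Teichmüller character: `ω(a) = lim_n a ^ (p ^ n)`. -/
noncomputable def teich (a : ℕ) : ℚ_[p] :=
  limUnder atTop (fun n => (a : ℚ_[p]) ^ p ^ n)

/-- `u ^ s` for a `p`-adic integer exponent `s`. -/
noncomputable def padPow (u : ℚ_[p]) (s : ℤ_[p]) : ℚ_[p] :=
  limUnder atTop (fun n => u ^ s.appr n)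

/-- The `p`-adic binomial coefficient `C(s, j) = s(s-1)⋯(s-j+1)/j!`. -/
noncomputable def cchoose (s : ℚ_[p]) (j : ℕ) : ℚ_[p] :=
  (∏ i ∈ range j, (s - (i : ℚ_[p]))) / (j.factorial : ℚ_[p])

/-- The `p`-adic interpolating function
`T_q(s, a, N : q^N) = ω(a)⁻¹ ⟨a⟩_q^s ∑_{j≥0} C(s,j) q^{aj} ((1-q^N)/(1-q^a))^j E_{j,q^N}`. -/
noncomputable def Tq (q : ℚ_[p]) (s : ℤ_[p]) (a N : ℕ) : ℚ_[p] :=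
  (teich p a)⁻¹ * padPow p ((teich p a)⁻¹ * ((1 - q ^ a) / (1 - q))) s *
    ∑' j : ℕ, cchoose p (s : ℚ_[p]) j * q ^ (a * j) *
      ((1 - q ^ N) / (1 - q ^ a)) ^ j * modEuler p (q ^ N) j

/-- The `q`-analogue of the higher order Dedekind type DC sums
`S_{m,q}(h, k : q^l) = ∑_{M=1}^{k-1} (-1)^{M-1} ((1-q^M)/(1-q^k)) E_{m,q^l}({hM/k})`. -/
noncomputable def Smq (q : ℚ_[p]) (m h k l : ℕ) : ℚ_[p] :=
  ∑ M ∈ Ico 1 k, (-1 : ℚ_[p]) ^ (M - 1) * ((1 - q ^ M) / (1 - q ^ k)) *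
    qEulerPoly p (q ^ l) m (qpowQ p q ((l : ℚ) * Int.fract ((h * M : ℚ) / k)))

/-- The `p`-adic Dedekind type DC sums
`S_{p,q}(s : h, k : q^k) = ∑_{M=1}^{k-1} ((1-q^M)/(1-q)) (-1)^{M-1} T_q(s, hM, k : q^k)`. -/
noncomputable def Spq (q : ℚ_[p]) (s : ℤ_[p]) (h k : ℕ) : ℚ_[p] :=
  ∑ M ∈ Ico 1 k, ((1 - q ^ M) / (1 - q)) * (-1 : ℚ_[p]) ^ (M - 1) * Tq p q s (h * M) k

/-- The Euler polynomials, via the recurrence `∑_{k<n} C(n,k) E_k(x) + 2 E_n(x) = 2 x^n`. -/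
noncomputable def eulerPoly (n : ℕ) (x : ℚ) : ℚ :=
  x ^ n - 1 / 2 * ∑ k ∈ (Finset.range n).attach, (n.choose k.1 : ℚ) * eulerPoly k.1 x
  termination_by n
  decreasing_by exact Finset.mem_range.mp k.2

/-- The periodic Euler function `Ē_m`, with `Ē_m(x) = E_m(x)` on `[0,1)` and
`Ē_m(x+1) = -Ē_m(x)`. -/
noncomputable def periodicEuler (m : ℕ) (x : ℚ) : ℚ :=
  (-1 : ℚ) ^ ⌊x⌋ * eulerPoly m (Int.fract x)

/-- The modified `q`-Euler numbers, as the limit `lim_N (1+q)/2 ∑_{x<p^N} [x]_q^n (-1)^x`. -/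
noncomputable def modEuler3 (q : ℚ_[p]) (n : ℕ) : ℚ_[p] :=
  limUnder atTop (fun N => (1 + q) / 2 *
    ∑ x ∈ range (p ^ N), ((1 - q ^ x) / (1 - q)) ^ n * (-1 : ℚ_[p]) ^ x)

lemma aux_norm_le_one {q : ℚ_[p]} (hq : ‖q - 1‖ < 1) : ‖q‖ ≤ 1 := by
  calc ‖q‖ = ‖(q - 1) + 1‖ := by ring_nf
  _ ≤ max ‖q - 1‖ ‖(1:ℚ_[p])‖ := Padic.nonarchimedean _ _
  _ ≤ 1 := by simp; exact hq.le

lemma aux_pow_sub_one {q : ℚ_[p]} (hq : ‖q‖ ≤ 1) (k : ℕ) : ‖q ^ k - 1‖ ≤ ‖q - 1‖ := by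
  induction k with
  | zero => simp
  | succ k ih =>
      have : q ^ (k+1) - 1 = q ^ k * (q - 1) + (q ^ k - 1) := by ring
      rw [this]
      refine le_trans (Padic.nonarchimedean _ _) (max_le ?_ ih)
      rw [norm_mul]
      calc ‖q ^ k‖ * ‖q - 1‖ ≤ 1 * ‖q - 1‖ := by
            gcongr; simpa using pow_le_one₀ (norm_nonneg q) hq
        _ = ‖q - 1‖ := one_mul _

lemma aux_geom_sub (q : ℚ_[p]) (hq : ‖q‖ ≤ 1) (k : ℕ) :
    ‖(∑ i ∈ range k, q ^ i) - (k : ℚ_[p])‖ ≤ ‖q - 1‖ := by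
  induction k with
  | zero => simp
  | succ k ih =>
      have : (∑ i ∈ range (k+1), q ^ i) - ((k+1 : ℕ) : ℚ_[p])
          = ((∑ i ∈ range k, q ^ i) - (k : ℚ_[p])) + (q ^ k - 1) := by
        rw [sum_range_succ]; push_cast; ring
      rw [this]
      exact le_trans (Padic.nonarchimedean _ _)
        (max_le ih (aux_pow_sub_one p hq k))

lemma aux_step {q : ℚ_[p]} (hq : ‖q - 1‖ < 1) :
    ‖q ^ p - 1‖ ≤ max ‖(p : ℚ_[p])‖ ‖q - 1‖ * ‖q - 1‖ := by
  have h1 : q ^ p - 1 = (∑ i ∈ range p, q ^ i) * (q - 1) := (geom_sum_mul q p).symm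
  rw [h1, norm_mul]
  gcongr
  have : (∑ i ∈ range p, q ^ i) = ((∑ i ∈ range p, q ^ i) - (p : ℚ_[p])) + (p : ℚ_[p]) := by ring
  rw [this]
  refine le_trans (Padic.nonarchimedean _ _) (max_le ?_ (le_max_left _ _))
  exact le_trans (aux_geom_sub p q (aux_norm_le_one p hq) p) (le_max_right _ _)

lemma aux_tendsto {q : ℚ_[p]} (hq : ‖1 - q‖ < 1) :
    Tendsto (fun N => q ^ p ^ N) atTop (𝓝 1) := by
  have hq' : ‖q - 1‖ < 1 := by rwa [← norm_neg, neg_sub]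
  set c := max ‖(p : ℚ_[p])‖ ‖q - 1‖ with hc
  have hc0 : 0 ≤ c := le_trans (norm_nonneg _) (le_max_left _ _)
  have hp1 : ‖(p : ℚ_[p])‖ < 1 := by
    rw [Padic.norm_p]
    rw [inv_lt_one₀]
    · exact_mod_cast (Fact.out : p.Prime).one_lt
    · exact_mod_cast (Fact.out : p.Prime).pos
  have hc1 : c < 1 := max_lt hp1 hq'
  have key : ∀ N, ‖q ^ p ^ N - 1‖ ≤ c ^ N * ‖q - 1‖ := by
    intro N
    induction N with
    | zero => simp
    | succ N ih =>
        have hlt : ‖q ^ p ^ N - 1‖ < 1 := by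
          refine lt_of_le_of_lt ih ?_
          calc c ^ N * ‖q - 1‖ ≤ 1 * ‖q - 1‖ := by
                gcongr
                exact pow_le_one₀ hc0 hc1.le
            _ < 1 := by simpa using hq'
        have := aux_step p hlt
        rw [← pow_mul, ← pow_succ] at this
        refine le_trans this ?_
        have hcc : max ‖(p:ℚ_[p])‖ ‖q ^ p ^ N - 1‖ ≤ c := by
          refine max_le (le_max_left _ _) ?_
          refine le_trans ih ?_
          calc c ^ N * ‖q - 1‖ ≤ 1 * ‖q - 1‖ := by
                gcongr; exact pow_le_one₀ hc0 hc1.le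
            _ = ‖q - 1‖ := one_mul _
            _ ≤ c := le_max_right _ _
        calc max ‖(p:ℚ_[p])‖ ‖q ^ p ^ N - 1‖ * ‖q ^ p ^ N - 1‖
            ≤ c * (c ^ N * ‖q - 1‖) := by gcongr
          _ = c ^ (N+1) * ‖q - 1‖ := by ring
  rw [tendsto_iff_norm_sub_tendsto_zero]
  refine squeeze_zero (fun _ => norm_nonneg _) key ?_
  have := (tendsto_pow_atTop_nhds_zero_of_lt_one hc0 hc1).mul_const ‖q - 1‖
  simpa using this

lemma aux_sum_eq (hp2 : p ≠ 2) {q : ℚ_[p]} (hroot : ∀ n : ℕ, 0 < n → q ^ n ≠ 1)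
    (n N : ℕ) :
    ∑ x ∈ range (p ^ N), ((1 - q ^ x) / (1 - q)) ^ n * (-1 : ℚ_[p]) ^ x
      = (1 / (1 - q)) ^ n * ∑ l ∈ range (n + 1),
          (n.choose l : ℚ_[p]) * (-1) ^ l * ((1 + (q ^ p ^ N) ^ l) / (1 + q ^ l)) := by
  have hql : ∀ l : ℕ, (1 : ℚ_[p]) + q ^ l ≠ 0 := by
    intro l
    rcases Nat.eq_zero_or_pos l with rfl | hl
    · norm_num
    · intro h
      have hql : q ^ l = -1 := by linear_combination h
      have : q ^ (2 * l) = 1 := by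
        rw [two_mul, pow_add, hql]; ring
      exact hroot (2 * l) (by omega) this
  have hodd : Odd (p ^ N) := ((Fact.out : p.Prime).odd_of_ne_two hp2).pow
  calc ∑ x ∈ range (p ^ N), ((1 - q ^ x) / (1 - q)) ^ n * (-1 : ℚ_[p]) ^ x
      = ∑ x ∈ range (p ^ N), ∑ l ∈ range (n + 1),
          (1 / (1 - q)) ^ n * ((n.choose l : ℚ_[p]) * (-1) ^ l * (-(q ^ l)) ^ x) := by
        refine sum_congr rfl fun x _ => ?_
        have h1 : (1 : ℚ_[p]) - q ^ x = (-(q ^ x)) + 1 := by ring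
        rw [div_pow, h1, add_pow, sum_div, sum_mul]
        refine sum_congr rfl fun l _ => ?_
        simp only [one_pow, one_div, inv_pow]
        ring
    _ = ∑ l ∈ range (n + 1), (1 / (1 - q)) ^ n *
          ((n.choose l : ℚ_[p]) * (-1) ^ l * ∑ x ∈ range (p ^ N), (-(q ^ l)) ^ x) := by
        rw [sum_comm]
        exact sum_congr rfl fun l _ => by rw [← mul_sum, ← mul_sum]
    _ = (1 / (1 - q)) ^ n * ∑ l ∈ range (n + 1),
          (n.choose l : ℚ_[p]) * (-1) ^ l * ((1 + (q ^ p ^ N) ^ l) / (1 + q ^ l)) := by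
        rw [← mul_sum]
        refine congrArg _ (sum_congr rfl fun l _ => ?_)
        have hne : -(q ^ l) ≠ 1 := by
          intro h
          exact hql l (by linear_combination -h)
        rw [geom_sum_eq hne]
        congr 1
        have : (-(q ^ l)) ^ p ^ N = -((q ^ p ^ N) ^ l) := by
          rw [hodd.neg_pow, ← pow_mul, mul_comm, pow_mul]
        rw [this]
        rw [show -((q ^ p ^ N) ^ l) - 1 = -(1 + (q ^ p ^ N) ^ l) by ring,
          show -(q ^ l) - 1 = -(1 + q ^ l) by ring, neg_div_neg_eq]

/-- Closed form for the modified `q`-Euler numbers: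
`E_{n,q} = (1+q) (1/(1-q))^n ∑_{l=0}^n C(n,l) (-1)^l / (1+q^l)`. -/
theorem modEuler_closed_form (hp2 : p ≠ 2) (q : ℚ_[p]) (hq : ‖1 - q‖ < 1)
    (hroot : ∀ n : ℕ, 0 < n → q ^ n ≠ 1) (n : ℕ) :
    modEuler3 p q n = (1 + q) * (1 / (1 - q)) ^ n *
      ∑ l ∈ range (n + 1), (n.choose l : ℚ_[p]) * (-1 : ℚ_[p]) ^ l * (1 / (1 + q ^ l)) := by
  set g : ℚ_[p] → ℚ_[p] := fun y => (1 + q) / 2 * ((1 / (1 - q)) ^ n *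
    ∑ l ∈ range (n + 1),
      (n.choose l : ℚ_[p]) * (-1) ^ l * ((1 + y ^ l) * (1 + q ^ l)⁻¹)) with hg
  have hcont : Continuous g := by unfold g; fun_prop
  have heq : (fun N => (1 + q) / 2 *
      ∑ x ∈ range (p ^ N), ((1 - q ^ x) / (1 - q)) ^ n * (-1 : ℚ_[p]) ^ x)
      = fun N => g (q ^ p ^ N) := by
    funext N
    rw [aux_sum_eq p hp2 hroot n N, hg]
    simp only [div_eq_mul_inv]
  have htend : Tendsto (fun N => g (q ^ p ^ N)) atTop (𝓝 (g 1)) :=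
    (hcont.tendsto 1).comp (aux_tendsto p hq)
  have hg1 : g 1 = (1 + q) * (1 / (1 - q)) ^ n *
      ∑ l ∈ range (n + 1), (n.choose l : ℚ_[p]) * (-1 : ℚ_[p]) ^ l * (1 / (1 + q ^ l)) := by
    rw [hg]
    simp only [one_pow, one_add_one_eq_two, one_div]
    have hs : ∑ l ∈ range (n + 1),
        (n.choose l : ℚ_[p]) * (-1) ^ l * (2 * (1 + q ^ l)⁻¹)
        = 2 * ∑ l ∈ range (n + 1), (n.choose l : ℚ_[p]) * (-1) ^ l * (1 + q ^ l)⁻¹ := by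
      rw [mul_sum]; exact sum_congr rfl fun l _ => by ring
    rw [hs]
    have h2 : (2 : ℚ_[p]) ≠ 0 := two_ne_zero
    field_simp
  unfold modEuler3
  rw [heq, htend.limUnder_eq, hg1]
end

section
/- Let p be an odd prime, ω the Teichmüller character mod p, and for a coprime to p and N divisible by p define T_q(s, a, N : q^N) = ω^{−1}(a)⟨a⟩_q^s Σ_{j≥0} C(s,j) q^{aj} ((1−q^N)/(1−q^a))^j E_{j,q^N}, where ⟨a⟩_q = ω^{−1}(a)(1−q^a)/(1−q). Then for every nonnegative integer m with m+1 ≡ 0 (mod p−1), T_q(m, a, N : q^N) = ((1−q^N)/(1−q))^m · E_{m,q^N}(a/N), i.e., T_q interpolates the values [N]_q^m E_{m,q^N}(a/N) p-adically. -/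
/-!
At `s = m` everything in `T_q` is finite: `⟨a⟩_q^m` is an honest power, `C(m, j)` is the
binomial coefficient, so the series stops at `j = m`, and the Teichmüller factor
`ω(a)^{-(m+1)}` is `1` because `ω(a)^{p-1} = 1` and `p - 1 ∣ m + 1`. On the other side,
`[x + t]_q = q^x [t]_q + [x]_q` and the binomial theorem expand `E_{m,q}(x)` as
`∑_j C(m, j) q^{xj} [x]_q^{m-j} E_{j,q}`; after the substitution `q ↦ q^N`, `x = a/N`, the two
finite sums agree term by term.

The limits defining `E_{j,q}` exist because, by summing geometric series, the `N`-th Riemann sum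
is a fixed rational function of `q^{p^N}`, continuous at `1`, and `q^{p^N} → 1`. Both this and
`q^n ≠ 1` for `q ≠ 1`, `n ≠ 0` rest on `‖q^n - 1‖ = ‖n‖ ‖q - 1‖`, valid for `p` odd.
-/

open Filter Topology Finset

variable (p : ℕ) [Fact p.Prime]

variable {p}

lemma PadicInt.appr_natCast_of_lt {m n : ℕ} (hm : m < p ^ n) : (m : ℤ_[p]).appr n = m := by
  have h : (((m : ℤ_[p]).appr n : ℕ) : ZMod (p ^ n)) = m := map_natCast (PadicInt.toZModPow n) m
  rwa [ZMod.natCast_eq_natCast_iff', Nat.mod_eq_of_lt (PadicInt.appr_lt _ n),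
    Nat.mod_eq_of_lt hm] at h

lemma padPow_natCast (u : ℚ_[p]) (m : ℕ) : padPow p u m = u ^ m :=
  (tendsto_const_nhds.congr' <| by
    filter_upwards [eventually_gt_atTop m] with n hn
    rw [PadicInt.appr_natCast_of_lt (hn.trans (Nat.lt_pow_self (Fact.out : p.Prime).one_lt))]
    ).limUnder_eq

lemma cchoose_natCast (m j : ℕ) : cchoose p (m : ℚ_[p]) j = m.choose j := by
  rw [cchoose, ← descPochhammer_eval_eq_prod_range, descPochhammer_eval_eq_descFactorial,
    Nat.descFactorial_eq_factorial_mul_choose, Nat.cast_mul,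
    mul_div_cancel_left₀ _ (Nat.cast_ne_zero.mpr j.factorial_ne_zero)]

namespace Padic

lemma norm_le_inv_of_norm_lt_one {x : ℚ_[p]} (hx : ‖x‖ < 1) : ‖x‖ ≤ (p : ℝ)⁻¹ := by
  simpa using (norm_lt_pow_iff_norm_le_pow_sub_one x 0).mp (by simpa using hx)

lemma inv_pow_pred_lt_norm_natCast (hp2 : p ≠ 2) {k : ℕ} (hk : 2 ≤ k) :
    (p : ℝ)⁻¹ ^ (k - 1) < ‖(k : ℚ_[p])‖ := by
  have hp3 : 3 ≤ p := lt_of_le_of_ne (Fact.out : p.Prime).two_le (Ne.symm hp2)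
  have hkp : k < p ^ (k - 1) := calc
    k ≤ 2 ^ (k - 1) := by have := Nat.lt_two_pow_self (n := k - 1); omega
    _ < 3 ^ (k - 1) := Nat.pow_lt_pow_left (by norm_num) (by omega)
    _ ≤ p ^ (k - 1) := Nat.pow_le_pow_left hp3 _
  rw [← not_le, inv_pow, ← zpow_natCast, ← zpow_neg]
  intro h
  have hdvd := (norm_int_le_pow_iff_dvd (k : ℤ) (k - 1)).mp (by exact_mod_cast h)
  have : p ^ (k - 1) ≤ k := by exact_mod_cast Int.le_of_dvd (by omega) hdvd
  omega

lemma norm_pow_mul_choose_lt (hp2 : p ≠ 2) {e : ℚ_[p]} (he : ‖e‖ < 1) (he0 : e ≠ 0)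
    {n k : ℕ} (hk : 2 ≤ k) (hkn : k ≤ n) :
    ‖e ^ k * (n.choose k : ℚ_[p])‖ < ‖(n : ℚ_[p]) * e‖ := by
  have hchoose : ‖(n.choose k : ℚ_[p])‖ * ‖(k : ℚ_[p])‖ ≤ ‖(n : ℚ_[p])‖ := by
    obtain ⟨n, rfl⟩ : ∃ n', n = n' + 1 := ⟨n - 1, by omega⟩
    obtain ⟨k, rfl⟩ : ∃ k', k = k' + 1 := ⟨k - 1, by omega⟩
    rw [← norm_mul, ← Nat.cast_mul, ← Nat.add_one_mul_choose_eq, Nat.cast_mul, norm_mul]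
    exact mul_le_of_le_one_right (norm_nonneg _) (IsUltrametricDist.norm_natCast_le_one _ _)
  have hC : 0 < ‖(n.choose k : ℚ_[p])‖ := by simpa using (Nat.choose_pos hkn).ne'
  have hek : ‖e‖ ^ (k - 1) < ‖(k : ℚ_[p])‖ :=
    (pow_le_pow_left₀ (norm_nonneg e) (norm_le_inv_of_norm_lt_one he) _).trans_lt
      (inv_pow_pred_lt_norm_natCast hp2 hk)
  calc ‖e ^ k * (n.choose k : ℚ_[p])‖ = ‖(n.choose k : ℚ_[p])‖ * ‖e‖ ^ (k - 1) * ‖e‖ := by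
        rw [norm_mul, norm_pow, mul_comm, mul_assoc, ← pow_succ, Nat.sub_add_cancel (by omega)]
    _ < ‖(n.choose k : ℚ_[p])‖ * ‖(k : ℚ_[p])‖ * ‖e‖ := by gcongr
    _ ≤ ‖(n : ℚ_[p]) * e‖ := by rw [norm_mul]; gcongr

theorem norm_pow_sub_one (hp2 : p ≠ 2) {q : ℚ_[p]} (hq : ‖q - 1‖ < 1) (n : ℕ) :
    ‖q ^ n - 1‖ = ‖(n : ℚ_[p])‖ * ‖q - 1‖ := by
  obtain ⟨e, rfl⟩ : ∃ e, q = e + 1 := ⟨q - 1, (sub_add_cancel q 1).symm⟩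
  rw [add_sub_cancel_right] at hq ⊢
  rcases eq_or_ne e 0 with he0 | he0
  · simp [he0]
  rcases Nat.eq_zero_or_pos n with rfl | hn
  · simp
  have hexpand :
      (e + 1) ^ n - 1 = ∑ k ∈ Ico 2 (n + 1), e ^ k * (n.choose k : ℚ_[p]) + n * e := by
    rw [add_pow, range_eq_Ico,
      sum_eq_sum_Ico_succ_bot (by omega), sum_eq_sum_Ico_succ_bot (by omega)]
    simp only [one_pow, mul_one, pow_zero, Nat.choose_zero_right, zero_add, pow_one,
      Nat.choose_one_right, Nat.cast_one, one_add_one_eq_two]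
    ring
  have hlead : 0 < ‖(n : ℚ_[p]) * e‖ :=
    norm_pos_iff.mpr (mul_ne_zero (by exact_mod_cast hn.ne') he0)
  have htail : ‖∑ k ∈ Ico 2 (n + 1), e ^ k * (n.choose k : ℚ_[p])‖ < ‖(n : ℚ_[p]) * e‖ := by
    obtain ⟨k, hk, hle⟩ := IsUltrametricDist.exists_norm_finsetSum_le (Ico 2 (n + 1))
      (fun k => e ^ k * (n.choose k : ℚ_[p]))
    rcases (Ico 2 (n + 1)).eq_empty_or_nonempty with hempty | hnonempty
    · simpa [hempty] using hlead
    obtain ⟨hk2, hkn⟩ := mem_Ico.mp (hk hnonempty)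
    exact hle.trans_lt (norm_pow_mul_choose_lt hp2 hq he0 hk2 (by omega))
  rw [hexpand, IsUltrametricDist.norm_add_eq_max_of_norm_ne_norm htail.ne, max_eq_right htail.le,
    norm_mul]

lemma norm_pow_sub_one_lt (hp2 : p ≠ 2) {q : ℚ_[p]} (hq : ‖q - 1‖ < 1) (n : ℕ) :
    ‖q ^ n - 1‖ < 1 := by
  rw [norm_pow_sub_one hp2 hq]
  exact (mul_le_of_le_one_left (norm_nonneg _)
    (IsUltrametricDist.norm_natCast_le_one _ n)).trans_lt hq

lemma pow_ne_one (hp2 : p ≠ 2) {q : ℚ_[p]} (hq : ‖q - 1‖ < 1) (hq1 : q ≠ 1) {n : ℕ}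
    (hn : n ≠ 0) : q ^ n ≠ 1 := by
  intro h
  have := norm_pow_sub_one hp2 hq n
  rw [h, sub_self, norm_zero, eq_comm, mul_eq_zero, norm_eq_zero, norm_eq_zero, sub_eq_zero] at this
  exact this.elim (by exact_mod_cast hn) hq1

lemma tendsto_pow_prime_pow_nhds_one (hp2 : p ≠ 2) {q : ℚ_[p]} (hq : ‖q - 1‖ < 1) :
    Tendsto (fun N => q ^ p ^ N) atTop (𝓝 1) := by
  rw [tendsto_iff_norm_sub_tendsto_zero]
  simp_rw [norm_pow_sub_one hp2 hq, Nat.cast_pow, norm_pow, norm_p]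
  simpa using (tendsto_pow_atTop_nhds_zero_of_lt_one (by positivity)
    (inv_lt_one_of_one_lt₀ (Nat.one_lt_cast.mpr (Fact.out : p.Prime).one_lt))).mul_const ‖q - 1‖

lemma one_add_ne_zero_of_norm_sub_one_lt (hp2 : p ≠ 2) {x : ℚ_[p]} (hx : ‖x - 1‖ < 1) :
    1 + x ≠ 0 := by
  intro h
  rw [show x - 1 = -(2 : ℕ) by rw [eq_neg_of_add_eq_zero_right h]; norm_num, norm_neg,
    norm_natCast_eq_one_iff.mpr ((Nat.coprime_primes Fact.out Nat.prime_two).mpr hp2)] at hx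
  exact lt_irrefl 1 hx

end Padic

section Teichmuller

variable {a : ℕ}

lemma norm_natCast_pow_prime_pow_pow_pred_sub_one_le (hap : a.Coprime p) (n : ℕ) :
    ‖((a : ℚ_[p]) ^ p ^ n) ^ (p - 1) - 1‖ ≤ (p : ℝ)⁻¹ ^ (n + 1) := by
  have heuler := Nat.ModEq.pow_totient (hap.pow_right (n + 1))
  rw [Nat.totient_prime_pow_succ Fact.out] at heuler
  have hdvd := Nat.modEq_iff_dvd.mp heuler.symm
  rw [inv_pow, ← zpow_natCast (p : ℝ), ← zpow_neg, ← pow_mul]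
  exact_mod_cast (Padic.norm_int_le_pow_iff_dvd _ (n + 1)).mpr (by exact_mod_cast hdvd)

lemma tendsto_teich (hap : a.Coprime p) :
    Tendsto (fun n => (a : ℚ_[p]) ^ p ^ n) atTop (𝓝 (teich p a)) := by
  have hp1 : (1 : ℝ) < p := Nat.one_lt_cast.mpr (Fact.out : p.Prime).one_lt
  refine CauchySeq.tendsto_limUnder (cauchySeq_of_le_geometric (p : ℝ)⁻¹ 1
    (inv_lt_one_of_one_lt₀ hp1) fun n => ?_)
  set t := (a : ℚ_[p]) ^ p ^ n
  have hnext : (a : ℚ_[p]) ^ p ^ (n + 1) = t * t ^ (p - 1) := by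
    rw [← pow_succ', ← pow_mul, Nat.sub_add_cancel (Fact.out : p.Prime).one_le, ← pow_succ]
  rw [dist_eq_norm, hnext, ← mul_one_sub, norm_mul, norm_sub_rev, one_mul]
  calc ‖t‖ * ‖t ^ (p - 1) - 1‖ ≤ 1 * (p : ℝ)⁻¹ ^ (n + 1) := by
        gcongr
        · simpa [t] using IsUltrametricDist.norm_natCast_le_one ℚ_[p] (a ^ p ^ n)
        · exact norm_natCast_pow_prime_pow_pow_pred_sub_one_le hap n
    _ ≤ (p : ℝ)⁻¹ ^ n := by
        rw [one_mul]
        exact pow_le_pow_of_le_one (by positivity) (inv_le_one_of_one_le₀ hp1.le) n.le_succ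

theorem teich_pow_pred (hap : a.Coprime p) : teich p a ^ (p - 1) = 1 := by
  have hp1 : (1 : ℝ) < p := Nat.one_lt_cast.mpr (Fact.out : p.Prime).one_lt
  refine tendsto_nhds_unique ((tendsto_teich hap).pow (p - 1)) ?_
  rw [tendsto_iff_norm_sub_tendsto_zero]
  exact squeeze_zero (fun n => norm_nonneg _) (norm_natCast_pow_prime_pow_pow_pred_sub_one_le hap)
    ((tendsto_pow_atTop_nhds_zero_of_lt_one (by positivity) (inv_lt_one_of_one_lt₀ hp1)).comp
      (tendsto_add_atTop_nat 1))

end Teichmuller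

lemma geom_sum_neg_of_odd {K : Type*} [Field K] {y : K} (hy : 1 + y ≠ 0) {M : ℕ} (hM : Odd M) :
    ∑ x ∈ range M, (-y) ^ x = (1 + y ^ M) / (1 + y) := by
  have hy' : -y ≠ 1 := fun h => hy (by rw [← h]; ring)
  rw [geom_sum_eq hy', hM.neg_pow, div_eq_div_iff (fun h => hy (by linear_combination -h)) hy]
  ring

lemma div_pow_add_mul_div_pow {K : Type*} [Field K] {x y z : K} (hy : y ≠ 0) (hz : z ≠ 0)
    (j k : ℕ) : (y / x) ^ (j + k) * (z / y) ^ j = (z / x) ^ (j + k) * (y / z) ^ k := by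
  simp only [div_pow, pow_add]
  field_simp

section qEuler

variable {Q : ℚ_[p]}

lemma modEulerSum_eq (hp2 : p ≠ 2) (hQ : ‖Q - 1‖ < 1) (n N : ℕ) :
    modEulerSum p Q n N = (1 + Q) / (1 + Q ^ p ^ N) *
      (∑ i ∈ range (n + 1),
        (n.choose i : ℚ_[p]) * (-1) ^ i * (1 + (Q ^ p ^ N) ^ i) / (1 + Q ^ i)) / (1 - Q) ^ n := by
  have hodd : Odd (p ^ N) := ((Fact.out : p.Prime).odd_of_ne_two hp2).pow
  have hterm : ∀ x : ℕ, ((1 - Q ^ x) / (1 - Q)) ^ n * (-1) ^ x = (∑ i ∈ range (n + 1),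
      (n.choose i : ℚ_[p]) * (-1) ^ i * (-Q ^ i) ^ x) / (1 - Q) ^ n := by
    intro x
    rw [div_pow, sub_eq_neg_add, add_pow, div_mul_eq_mul_div, sum_mul]
    congr 1
    refine sum_congr rfl fun i _ => ?_
    rw [neg_pow, neg_pow (Q ^ i), ← pow_mul, ← pow_mul, mul_comm x i]
    ring
  have hQi (i : ℕ) : 1 + Q ^ i ≠ 0 :=
    Padic.one_add_ne_zero_of_norm_sub_one_lt hp2 (Padic.norm_pow_sub_one_lt hp2 hQ i)
  rw [modEulerSum, mul_div_assoc]
  congr 1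
  simp_rw [hterm, ← sum_div, sum_comm (s := range (p ^ N)), ← mul_sum,
    geom_sum_neg_of_odd (hQi _) hodd, mul_div_assoc, pow_right_comm]

lemma tendsto_modEulerSum (hp2 : p ≠ 2) (hQ : ‖Q - 1‖ < 1) (n : ℕ) :
    Tendsto (modEulerSum p Q n) atTop (𝓝 (modEuler p Q n)) := by
  have hF : ContinuousAt (fun x : ℚ_[p] => (1 + Q) / (1 + x) * (∑ i ∈ range (n + 1),
      (n.choose i : ℚ_[p]) * (-1) ^ i * (1 + x ^ i) / (1 + Q ^ i)) / (1 - Q) ^ n) 1 := by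
    have h2 : (1 : ℚ_[p]) + 1 ≠ 0 := Padic.one_add_ne_zero_of_norm_sub_one_lt hp2 (by simp)
    fun_prop (disch := exact h2)
  have hlim := (hF.tendsto.comp (Padic.tendsto_pow_prime_pow_nhds_one hp2 hQ)).congr
    fun N => (modEulerSum_eq hp2 hQ n N).symm
  rwa [modEuler, hlim.limUnder_eq]

lemma qEulerPoly_riemannSum_eq (hQ0 : Q ≠ 0) (m : ℕ) (qx : ℚ_[p]) (N : ℕ) :
    (1 + Q) / (1 + Q ^ p ^ N) *
      ∑ t ∈ range (p ^ N), (Q ^ t)⁻¹ * ((1 - qx * Q ^ t) / (1 - Q)) ^ m * (-Q) ^ t =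
    ∑ j ∈ range (m + 1),
      (m.choose j : ℚ_[p]) * qx ^ j * ((1 - qx) / (1 - Q)) ^ (m - j) * modEulerSum p Q j N := by
  have hterm : ∀ t : ℕ, (Q ^ t)⁻¹ * ((1 - qx * Q ^ t) / (1 - Q)) ^ m * (-Q) ^ t =
      ∑ j ∈ range (m + 1), (m.choose j : ℚ_[p]) * qx ^ j * ((1 - qx) / (1 - Q)) ^ (m - j) *
        (((1 - Q ^ t) / (1 - Q)) ^ j * (-1) ^ t) := by
    intro t
    have hsplit :
        (1 - qx * Q ^ t) / (1 - Q) = qx * ((1 - Q ^ t) / (1 - Q)) + (1 - qx) / (1 - Q) := by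
      rw [← mul_div_assoc, ← add_div]
      ring
    have hQt : (Q ^ t)⁻¹ * Q ^ t = 1 := inv_mul_cancel₀ (pow_ne_zero t hQ0)
    rw [hsplit, add_pow, neg_pow, mul_sum, sum_mul]
    refine sum_congr rfl fun j _ => ?_
    rw [mul_pow]
    linear_combination (m.choose j * qx ^ j * ((1 - qx) / (1 - Q)) ^ (m - j) *
      ((1 - Q ^ t) / (1 - Q)) ^ j * (-1) ^ t : ℚ_[p]) * hQt
  simp_rw [hterm, modEulerSum]
  rw [sum_comm, mul_sum]
  refine sum_congr rfl fun j _ => ?_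
  rw [← mul_sum]
  ring

theorem qEulerPoly_eq_sum (hp2 : p ≠ 2) (hQ : ‖Q - 1‖ < 1) (m : ℕ) (qx : ℚ_[p]) :
    qEulerPoly p Q m qx = ∑ j ∈ range (m + 1),
      (m.choose j : ℚ_[p]) * qx ^ j * ((1 - qx) / (1 - Q)) ^ (m - j) * modEuler p Q j := by
  have hQ0 : Q ≠ 0 := by rintro rfl; simp at hQ
  refine Tendsto.limUnder_eq ?_
  simp_rw [qEulerPoly_riemannSum_eq hQ0]
  exact tendsto_finsetSum _ fun j _ => (tendsto_modEulerSum hp2 hQ j).const_mul _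

end qEuler

lemma Tq_natCast (q : ℚ_[p]) (m a N : ℕ) :
    Tq p q m a N = (teich p a)⁻¹ ^ (m + 1) * ((1 - q ^ a) / (1 - q)) ^ m *
      ∑ j ∈ range (m + 1), (m.choose j : ℚ_[p]) * (q ^ a) ^ j *
        ((1 - q ^ N) / (1 - q ^ a)) ^ j * modEuler p (q ^ N) j := by
  rw [Tq, PadicInt.coe_natCast, padPow_natCast, tsum_eq_sum (s := range (m + 1)) fun j hj => by
    rw [cchoose_natCast, Nat.choose_eq_zero_of_lt (by simpa using hj)]; simp]
  simp_rw [cchoose_natCast, ← pow_mul, mul_pow]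
  ring

theorem Tq_interpolates_general (hp2 : p ≠ 2) (q : ℚ_[p]) (hq : ‖1 - q‖ < 1)
    (a N : ℕ) (ha : 0 < a) (hN : 0 < N) (hap : a.Coprime p)
    (m : ℕ) (hm : (p - 1) ∣ (m + 1)) :
    Tq p q (m : ℤ_[p]) a N = ((1 - q ^ N) / (1 - q)) ^ m * qEulerPoly p (q ^ N) m (q ^ a) := by
  rw [norm_sub_rev] at hq
  have hteich : (teich p a)⁻¹ ^ (m + 1) = 1 := by
    obtain ⟨c, hc⟩ := hm
    rw [hc, pow_mul, inv_pow, teich_pow_pred hap, inv_one, one_pow]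
  rcases eq_or_ne q 1 with rfl | hq1
  · -- both sides carry the factor `(0 / 0) ^ m = 0`, as `m ≥ 1`
    have hm0 : m ≠ 0 := by
      rintro rfl
      have := Nat.le_of_dvd one_pos hm
      have := (Fact.out : p.Prime).two_le
      omega
    simp [Tq_natCast, zero_pow hm0]
  have hqa : 1 - q ^ a ≠ 0 := sub_ne_zero.mpr (Padic.pow_ne_one hp2 hq hq1 ha.ne').symm
  have hqN : 1 - q ^ N ≠ 0 := sub_ne_zero.mpr (Padic.pow_ne_one hp2 hq hq1 hN.ne').symm
  rw [Tq_natCast, hteich, one_mul, qEulerPoly_eq_sum hp2 (Padic.norm_pow_sub_one_lt hp2 hq N),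
    mul_sum, mul_sum]
  refine sum_congr rfl fun j hj => ?_
  obtain ⟨k, rfl⟩ : ∃ k, m = j + k := ⟨m - j, by simp at hj; omega⟩
  rw [Nat.add_sub_cancel_left]
  linear_combination ((j + k).choose j * (q ^ a) ^ j * modEuler p (q ^ N) j : ℚ_[p]) *
    div_pow_add_mul_div_pow (x := 1 - q) hqa hqN j k

/-- For `m + 1 ≡ 0 (mod p-1)`, the interpolating function takes the values
`T_q(m, a, N : q^N) = ((1-q^N)/(1-q))^m E_{m,q^N}(a/N)`. -/
theorem Tq_interpolates (hp2 : p ≠ 2) (q : ℚ_[p]) (hq : ‖1 - q‖ < 1)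
    (a N : ℕ) (ha : 0 < a) (hN : 0 < N) (hap : a.Coprime p) (hpN : p ∣ N)
    (m : ℕ) (hm : (p - 1) ∣ (m + 1)) :
    Tq p q (m : ℤ_[p]) a N = ((1 - q ^ N) / (1 - q)) ^ m * qEulerPoly p (q ^ N) m (q ^ a) :=
  Tq_interpolates_general hp2 q hq a N ha hN hap m hm
end
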